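/- arXiv:1704.07072 — 4 statements merged into one kernel-verified Lean document; each statement's English description precedes it below -/
import Mathlib

section
/- Any unit dual quaternion Q with rotation angle θ satisfying sin(θ/2) ≠ 0 can be written as Q = [cos(Θ/2), sin(Θ/2)·V], where Θ = θ + εθ_ε is a dual angle and V = v + εv_ε is a dual vector with v a unit vector and v·v_ε = 0 (the Plücker conditions of a screw axis). -/
/-!
Write a quaternion as a scalar and a vector part. For `r = (c, s v)` with `c = cos (θ/2)`,
`s = sin (θ/2)` and a pure `t`, the dual part is `½ t r = (-(s/2) t⬝v, (c/2) t + (s/2) t × v)`.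
Take the pitch `θε = t⬝v` and the moment `vε = ½ (t × v + cot (θ/2) v × (t × v))`. For a unit `v`
the triple product expansion gives `v × (t × v) = t - (t⬝v) v`, and `s cot (θ/2) = c` turns
`s vε + (θε/2) c v` into the vector part above. Both summands of `vε` are orthogonal to `v`.
-/

open scoped Quaternion Matrix

/-- The dual quaternion `r + ε s`. -/
def dq (r s : ℍ[ℝ]) : DualNumber ℍ[ℝ] := ⟨r, s⟩

namespace Quaternion

variable {R : Type*} [CommRing R]

@[simps]
def ofScalarVec (a : R) (x : Fin 3 → R) : ℍ[R] := ⟨a, x 0, x 1, x 2⟩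

theorem ofScalarVec_mul_ofScalarVec (a b : R) (x y : Fin 3 → R) :
    ofScalarVec a x * ofScalarVec b y =
      ofScalarVec (a * b - x ⬝ᵥ y) (a • y + b • x + x ⨯₃ y) := by
  ext <;> simp [cross_apply, Matrix.vec3_dotProduct, Matrix.vecHead, Matrix.vecTail] <;> ring

theorem smul_ofScalarVec (c a : R) (x : Fin 3 → R) :
    c • ofScalarVec a x = ofScalarVec (c * a) (c • x) :=
  rfl

end Quaternion

open Quaternion

noncomputable def screwMoment (θ : ℝ) (v t : Fin 3 → ℝ) : Fin 3 → ℝ :=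
  (2⁻¹ : ℝ) • (t ⨯₃ v + Real.cot (θ / 2) • v ⨯₃ (t ⨯₃ v))

theorem dotProduct_screwMoment (θ : ℝ) (v t : Fin 3 → ℝ) : v ⬝ᵥ screwMoment θ v t = 0 := by
  simp only [screwMoment, dotProduct_smul, dotProduct_add, dot_cross_self, dot_self_cross,
    smul_zero, add_zero]

theorem sin_smul_screwMoment_add {θ : ℝ} (hθ : Real.sin (θ / 2) ≠ 0) {v : Fin 3 → ℝ}
    (hv : v ⬝ᵥ v = 1) (t : Fin 3 → ℝ) :
    Real.sin (θ / 2) • screwMoment θ v t + ((t ⬝ᵥ v) / 2 * Real.cos (θ / 2)) • v =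
      (2⁻¹ : ℝ) • (Real.cos (θ / 2) • t + Real.sin (θ / 2) • t ⨯₃ v) := by
  have hcot : Real.sin (θ / 2) * Real.cot (θ / 2) = Real.cos (θ / 2) := by
    rw [Real.cot_eq_cos_div_sin, mul_div_cancel₀ _ hθ]
  rw [screwMoment, cross_cross_eq_smul_sub_smul', hv, one_smul]
  linear_combination (norm := module) hcot • ((2⁻¹ : ℝ) • (t - (t ⬝ᵥ v) • v))

theorem unit_dual_quaternion_screw_form (θ : ℝ) (hθ : Real.sin (θ / 2) ≠ 0)
    (v t : Fin 3 → ℝ) (hv : v ⬝ᵥ v = 1)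
    (r : ℍ[ℝ])
    (hr : r = ⟨Real.cos (θ / 2), Real.sin (θ / 2) * v 0, Real.sin (θ / 2) * v 1,
      Real.sin (θ / 2) * v 2⟩)
    (tq : ℍ[ℝ]) (htq : tq = ⟨0, t 0, t 1, t 2⟩) :
    ∃ θε : ℝ, ∃ vε : Fin 3 → ℝ, v ⬝ᵥ vε = 0 ∧
      dq r ((2⁻¹ : ℝ) • (tq * r)) =
        dq ⟨Real.cos (θ / 2), Real.sin (θ / 2) * v 0, Real.sin (θ / 2) * v 1,
              Real.sin (θ / 2) * v 2⟩
           ⟨-(θε / 2) * Real.sin (θ / 2),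
              Real.sin (θ / 2) * vε 0 + (θε / 2) * Real.cos (θ / 2) * v 0,
              Real.sin (θ / 2) * vε 1 + (θε / 2) * Real.cos (θ / 2) * v 1,
              Real.sin (θ / 2) * vε 2 + (θε / 2) * Real.cos (θ / 2) * v 2⟩ := by
  subst hr htq
  refine ⟨t ⬝ᵥ v, screwMoment θ v t, dotProduct_screwMoment θ v t, ?_⟩
  have hdual :
      (2⁻¹ : ℝ) • (ofScalarVec 0 t * ofScalarVec (Real.cos (θ / 2)) (Real.sin (θ / 2) • v)) =
        ofScalarVec (-((t ⬝ᵥ v) / 2) * Real.sin (θ / 2))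
          (Real.sin (θ / 2) • screwMoment θ v t + ((t ⬝ᵥ v) / 2 * Real.cos (θ / 2)) • v) := by
    rw [ofScalarVec_mul_ofScalarVec, smul_ofScalarVec, sin_smul_screwMoment_add hθ hv,
      dotProduct_smul, map_smul, zero_smul, zero_add, smul_eq_mul]
    congr 1
    ring
  exact congrArg (dq _) hdual
end

section
/- For a rotation R about unit axis v by angle θ (Rodrigues formula), the point u = (1/2)(t - (tᵀv)v + cot(θ/2) v × t) satisfies (I - R)u = t - (tᵀv)v, i.e., it solves the fixed-axis equation for the component of t orthogonal to v, and moreover uᵀv = 0. -/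
/-!
Put `w = t - (t ⬝ᵥ v) • v`, which is orthogonal to `v` and has `v ⨯₃ w = v ⨯₃ t`. On the plane
`v⊥` the map `J = v ⨯₃ ·` satisfies `J² = -1`, so the plane is a copy of `ℂ` with `J = i`, the
rotation acts as `e^{iθ}`, and `u = ½ (1 + i cot (θ/2)) w`. The claim is then the identity
`(1 - e^{iθ}) · ½ (1 + i cot (θ/2)) = 1`, i.e. `(1 - cos θ) cot (θ/2) = sin θ` and
`1 - cos θ + sin θ cot (θ/2) = 2`.
-/

open scoped Matrix

section CrossProduct

variable {R : Type*} [CommRing R] {v w : Fin 3 → R}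

theorem dotProduct_sub_smul_dotProduct_self (hv : v ⬝ᵥ v = 1) (t : Fin 3 → R) :
    v ⬝ᵥ (t - (t ⬝ᵥ v) • v) = 0 := by
  rw [dotProduct_sub, dotProduct_smul, hv, smul_eq_mul, mul_one, dotProduct_comm, sub_self]

theorem cross_sub_smul_self (v t : Fin 3 → R) (a : R) : v ⨯₃ (t - a • v) = v ⨯₃ t := by
  rw [map_sub, map_smul, cross_self, smul_zero, sub_zero]

theorem cross_cross_self_of_dotProduct_eq_zero (hv : v ⬝ᵥ v = 1) (hw : v ⬝ᵥ w = 0) :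
    v ⨯₃ (v ⨯₃ w) = -w := by
  rw [cross_cross_eq_smul_sub_smul', hw, hv, zero_smul, one_smul, zero_sub]

theorem smul_add_smul_cross_dotProduct (hw : v ⬝ᵥ w = 0) (a b : R) :
    (a • w + b • v ⨯₃ w) ⬝ᵥ v = 0 := by
  rw [add_dotProduct, smul_dotProduct, smul_dotProduct, dotProduct_comm, hw, dotProduct_comm,
    dot_self_cross, smul_zero, smul_zero, add_zero]

theorem sub_rodrigues_smul_add_smul_cross (hv : v ⬝ᵥ v = 1) (hw : v ⬝ᵥ w = 0) (a b s c : R) :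
    let u := a • w + b • v ⨯₃ w
    u - (u + s • v ⨯₃ u + (1 - c) • v ⨯₃ (v ⨯₃ u)) =
      ((1 - c) * a + s * b) • w + ((1 - c) * b - s * a) • v ⨯₃ w := by
  intro u
  have hvu : v ⨯₃ u = a • v ⨯₃ w - b • w := by
    rw [map_add, map_smul, map_smul, cross_cross_self_of_dotProduct_eq_zero hv hw, smul_neg,
      ← sub_eq_add_neg]
  have hvvu : v ⨯₃ (v ⨯₃ u) = -u := by
    refine cross_cross_self_of_dotProduct_eq_zero hv ?_
    rw [dotProduct_comm]
    exact smul_add_smul_cross_dotProduct hw a b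
  rw [hvvu, hvu]
  module

end CrossProduct

namespace Real

theorem one_sub_cos_mul_cot_half {θ : ℝ} (h : sin (θ / 2) ≠ 0) :
    (1 - cos θ) * (cos (θ / 2) / sin (θ / 2)) = sin θ := by
  obtain ⟨x, rfl⟩ : ∃ x, θ = 2 * x := ⟨θ / 2, by ring⟩
  rw [mul_div_cancel_left₀ x two_ne_zero] at h ⊢
  rw [cos_two_mul', sin_two_mul]
  field_simp
  linear_combination -cos x * sin_sq_add_cos_sq x

theorem one_sub_cos_add_sin_mul_cot_half {θ : ℝ} (h : sin (θ / 2) ≠ 0) :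
    1 - cos θ + sin θ * (cos (θ / 2) / sin (θ / 2)) = 2 := by
  obtain ⟨x, rfl⟩ : ∃ x, θ = 2 * x := ⟨θ / 2, by ring⟩
  rw [mul_div_cancel_left₀ x two_ne_zero] at h ⊢
  rw [cos_two_mul', sin_two_mul]
  field_simp
  linear_combination sin_sq_add_cos_sq x

end Real

theorem screw_axis_point_solves_fixed_axis_equation (θ : ℝ) (hθ : Real.sin (θ / 2) ≠ 0)
    (v t : Fin 3 → ℝ) (hv : v ⬝ᵥ v = 1) :
    let u := (2⁻¹ : ℝ) •
      (t - (t ⬝ᵥ v) • v + (Real.cos (θ / 2) / Real.sin (θ / 2)) • (v ⨯₃ t))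
    let Ru := u + Real.sin θ • (v ⨯₃ u) + (1 - Real.cos θ) • (v ⨯₃ (v ⨯₃ u))
    u - Ru = t - (t ⬝ᵥ v) • v ∧ u ⬝ᵥ v = 0 := by
  set w := t - (t ⬝ᵥ v) • v
  set cot := Real.cos (θ / 2) / Real.sin (θ / 2)
  have hw : v ⬝ᵥ w = 0 := dotProduct_sub_smul_dotProduct_self hv t
  have hu : (2⁻¹ : ℝ) • (w + cot • v ⨯₃ t) = (2⁻¹ : ℝ) • w + (2⁻¹ * cot) • v ⨯₃ w := by
    rw [cross_sub_smul_self, smul_add, smul_smul]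
  have hw_coeff : (1 - Real.cos θ) * 2⁻¹ + Real.sin θ * (2⁻¹ * cot) = 1 := by
    linear_combination 2⁻¹ * Real.one_sub_cos_add_sin_mul_cot_half hθ
  have hvw_coeff : (1 - Real.cos θ) * (2⁻¹ * cot) - Real.sin θ * 2⁻¹ = 0 := by
    linear_combination 2⁻¹ * Real.one_sub_cos_mul_cot_half hθ
  simp only [hu]
  refine ⟨?_, smul_add_smul_cross_dotProduct hw _ _⟩
  rw [sub_rodrigues_smul_add_smul_cross hv hw, hw_coeff, hvw_coeff, one_smul, zero_smul, add_zero]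
end

section
/- Let r = [q₀, q] be a unit quaternion for rotation by angle θ about unit axis v, θ_ε = tᵀv, and v_ε the screw moment v_ε = (1/2)(t × v + cot(θ/2) v × (t × v)). Then sin(θ/2)·v_ε + (θ_ε/2)·cos(θ/2)·v = (1/2)(t × q + q₀ t), which equals the vector part of (1/2)t·r. -/
/-!
For a unit axis `v`, the vector triple product gives `v × (t × v) = t - (t ⬝ v) v`, so after
multiplying by `sin(θ/2)` the `cot(θ/2)` term of the screw moment becomes `cos(θ/2) t` minus
exactly the `θε` term. What remains, `½ (t × q + q₀ t)`, is the vector part of `½ t r` by the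
Hamilton product formula `im (a b) = re a · im b + re b · im a + im a × im b`.
-/

open scoped Quaternion Matrix

theorem smul_screw_moment_add_smul_axis {K : Type*} [Field K] {s : K} (hs : s ≠ 0) (c : K)
    {v : Fin 3 → K} (hv : v ⬝ᵥ v = 1) (t : Fin 3 → K) :
    s • ((2⁻¹ : K) • ((t ⨯₃ v) + (c / s) • (v ⨯₃ (t ⨯₃ v)))) + ((t ⬝ᵥ v / 2) * c) • v =
      (2⁻¹ : K) • ((t ⨯₃ (s • v)) + c • t) := by
  obtain ⟨k, rfl⟩ : ∃ k, c = s * k := ⟨c / s, (mul_div_cancel₀ c hs).symm⟩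
  rw [mul_div_cancel_left₀ k hs, cross_cross_eq_smul_sub_smul', hv, map_smul]
  module

namespace Quaternion

variable {R : Type*} [CommRing R]

def imVec (a : ℍ[R]) : Fin 3 → R := ![a.imI, a.imJ, a.imK]

theorem imVec_mul (a b : ℍ[R]) :
    (a * b).imVec = a.re • b.imVec + b.re • a.imVec + a.imVec ⨯₃ b.imVec := by
  simp only [imVec, imI_mul, imJ_mul, imK_mul, cross_apply, Matrix.smul_vec3, Matrix.vec3_add,
    smul_eq_mul, Matrix.cons_val_zero, Matrix.cons_val_one, Matrix.cons_val_two,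
    Matrix.tail_cons, Matrix.head_cons]
  exact Matrix.vec3_eq (by ring) (by ring) (by ring)

theorem imVec_smul (r : R) (a : ℍ[R]) : (r • a).imVec = r • a.imVec := by
  ext i
  fin_cases i <;> simp [imVec]

theorem imVec_mk (a : R) (u : Fin 3 → R) : imVec (⟨a, u 0, u 1, u 2⟩ : ℍ[R]) = u := by
  ext i
  fin_cases i <;> rfl

end Quaternion

theorem screw_moment_vector_part (θ : ℝ) (hθ : Real.sin (θ / 2) ≠ 0)
    (v t : Fin 3 → ℝ) (hv : v ⬝ᵥ v = 1) :
    let θε := t ⬝ᵥ v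
    let vε := (2⁻¹ : ℝ) •
      ((t ⨯₃ v) + (Real.cos (θ / 2) / Real.sin (θ / 2)) • (v ⨯₃ (t ⨯₃ v)))
    let q₀ := Real.cos (θ / 2)
    let q := Real.sin (θ / 2) • v
    let w := (2⁻¹ : ℝ) • ((t ⨯₃ q) + q₀ • t)
    let r : ℍ[ℝ] := ⟨q₀, q 0, q 1, q 2⟩
    let tq : ℍ[ℝ] := ⟨0, t 0, t 1, t 2⟩
    Real.sin (θ / 2) • vε + ((θε / 2) * Real.cos (θ / 2)) • v = w ∧
      ((2⁻¹ : ℝ) • (tq * r)).imI = w 0 ∧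
      ((2⁻¹ : ℝ) • (tq * r)).imJ = w 1 ∧
      ((2⁻¹ : ℝ) • (tq * r)).imK = w 2 := by
  intro θε vε q₀ q w r tq
  have hw : ((2⁻¹ : ℝ) • (tq * r)).imVec = w := by
    rw [Quaternion.imVec_smul, Quaternion.imVec_mul, Quaternion.imVec_mk, Quaternion.imVec_mk]
    simp only [w, tq, r]
    module
  exact ⟨smul_screw_moment_add_smul_axis hθ _ hv t, congrFun hw 0, congrFun hw 1, congrFun hw 2⟩
end

section
/- For a pure dual quaternion of the form Q = V·(Θ/2), where V = v + εv_ε is a dual unit vector (‖v‖ = 1, v·v_ε = 0) and Θ = θ + εθ_ε a dual angle, the dual quaternion exponential satisfies exp(V·Θ/2) = [cos(Θ/2), sin(Θ/2)·V]. -/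
/-!
A dual unit vector `V = v + ε v_ε` squares to `-1`: for pure quaternions this is exactly
`‖v‖ = 1` together with `v ⊥ v_ε`. Hence the `ℝ`-algebra map from `ℂ` to the dual quaternions
sending `i` to `V` carries `exp (t i) = cos t + i sin t` to `exp (t V) = cos t + sin t V`.
Splitting the dual angle, `V Θ/2 = (θ/2) V + ε (θ_ε/2) v` is a sum of commuting terms whose
second one squares to zero, so `exp (V Θ/2) = (cos (θ/2) + sin (θ/2) V) (1 + ε (θ_ε/2) v)`,
which expands to the claim.
-/

open scoped Quaternion

open TrivSqZeroExt NormedSpace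

theorem exp_smul_of_mul_self_eq_neg_one {A : Type*} [NormedRing A] [NormedAlgebra ℝ A]
    {J : A} (hJ : J * J = -1) (c : ℝ) :
    exp (c • J) = algebraMap ℝ A (Real.cos c) + Real.sin c • J := by
  -- The `exp` API takes the `ℚ`-algebra structure as an instance; none is derived from `ℝ`.
  let : NormedAlgebra ℚ A := .restrictScalars ℚ ℝ A
  have hf : Continuous (Complex.liftAux J hJ) := by
    change Continuous fun z : ℂ => algebraMap ℝ A z.re + z.im • J
    fun_prop
  calc exp (c • J) = exp (Complex.liftAux J hJ (c * Complex.I)) := by simp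
    _ = Complex.liftAux J hJ (exp (c * Complex.I)) := (map_exp _ hf _).symm
    _ = algebraMap ℝ A (Real.cos c) + Real.sin c • J := by
      simp [← Complex.exp_eq_exp_ℂ, Complex.exp_mul_I, Complex.cos_ofReal_re,
        Complex.sin_ofReal_re]

namespace Quaternion

theorem mul_add_mul_swap_of_re_eq_zero {R : Type*} [CommRing R] [NoZeroDivisors R] [CharZero R]
    {a b : ℍ[R]} (ha : a.re = 0) (hb : b.re = 0) :
    a * b + b * a = 2 * ((a * b).re : ℍ[R]) := by
  rw [← self_add_star, star_mul, star_eq_neg.mpr ha, star_eq_neg.mpr hb, neg_mul_neg]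

theorem mul_self_eq_neg_one_of_re_eq_zero {a : ℍ[ℝ]} (ha : a.re = 0) (h : ‖a‖ = 1) :
    a * a = -1 := by
  rw [← sq, sq_eq_neg_normSq.mpr ha, normSq_eq_norm_mul_self, h, mul_one, coe_one]

end Quaternion

@[simp] theorem fst_dq (r s : ℍ[ℝ]) : (dq r s).fst = r := rfl

@[simp] theorem snd_dq (r s : ℍ[ℝ]) : (dq r s).snd = s := rfl

theorem dq_mul_self_eq_neg_one {r s : ℍ[ℝ]} (hr : r.re = 0) (hs : s.re = 0) (hunit : ‖r‖ = 1)
    (horth : (r * s).re = 0) : dq r s * dq r s = -1 := by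
  ext : 1
  · simp [Quaternion.mul_self_eq_neg_one_of_re_eq_zero hr hunit]
  · simp [Quaternion.mul_add_mul_swap_of_re_eq_zero hr hs, horth]

theorem dq_mul_dq_coe (r s : ℍ[ℝ]) (a b : ℝ) :
    dq r s * dq a b = a • dq r s + inr (b • r) := by
  ext : 1 <;> simp [Quaternion.mul_coe_eq_smul, add_comm]

theorem commute_smul_dq_inr_smul (r s : ℍ[ℝ]) (a b : ℝ) :
    Commute (a • dq r s) (inr (b • r)) := by
  ext : 1 <;> simp [smul_comm a b]

theorem exp_dual_quaternion_screw (θ θε : ℝ) (vq vε : ℍ[ℝ])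
    (hv : vq.re = 0) (hvε : vε.re = 0) (hunit : ‖vq‖ = 1)
    (horth : (vq * vε).re = 0) :
    NormedSpace.exp
        (dq vq vε * dq ((θ / 2 : ℝ) : ℍ[ℝ]) ((θε / 2 : ℝ) : ℍ[ℝ])) =
      dq (((Real.cos (θ / 2) : ℝ) : ℍ[ℝ]) + Real.sin (θ / 2) • vq)
         (((-(θε / 2) * Real.sin (θ / 2) : ℝ) : ℍ[ℝ]) + Real.sin (θ / 2) • vε +
            ((θε / 2) * Real.cos (θ / 2)) • vq) := by
  let : NormedAlgebra ℚ (DualNumber ℍ[ℝ]) := .restrictScalars ℚ ℝ _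
  rw [dq_mul_dq_coe, exp_add_of_commute (commute_smul_dq_inr_smul _ _ _ _),
    exp_smul_of_mul_self_eq_neg_one (dq_mul_self_eq_neg_one hv hvε hunit horth), exp_inr]
  ext : 1
  · simp [algebraMap_eq_inl', Quaternion.algebraMap_def]
  · have hsq := Quaternion.mul_self_eq_neg_one_of_re_eq_zero hv hunit
    have hcoe (x : ℝ) : (x : ℍ[ℝ]) = x • 1 := Algebra.algebraMap_eq_smul_one x
    simp only [snd_add, snd_mul, snd_smul, snd_one, fst_inr, snd_inr, fst_dq, snd_dq,
      Algebra.algebraMap_eq_smul_one, smul_eq_mul, MulOpposite.smul_eq_mul_unop,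
      MulOpposite.unop_op, add_mul, mul_add, smul_mul_assoc, mul_smul_comm, smul_add, smul_neg,
      mul_zero, mul_one, one_mul, hsq, hcoe]
    module
end
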